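/- The matrix T₁ := G₁·G₂·G₁ has order 2 (T₁² = I and T₁ ≠ I), the matrix T₂ := G₂·G₁⁹·G₂⁻¹ has order 2, and T₂·(G₂·G₁²)·T₂ equals the diagonal matrix diag(−1, −1, 1). -/
import Mathlib

open Complex Matrix

/-- `t = (√2/2)·e^{2iπ/3}` -/
noncomputable def t : ℂ := ((Real.sqrt 2 : ℂ) / 2) * Complex.exp (2 * (Real.pi : ℂ) * Complex.I / 3)

/-- `G₁ = e^{iπ/9}·diag(2t̄², 2t², −2t̄²)` -/
noncomputable def G₁ : Matrix (Fin 3) (Fin 3) ℂ :=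
  Complex.exp ((Real.pi : ℂ) * Complex.I / 9) •
    Matrix.diagonal ![2 * (starRingEnd ℂ t) ^ 2, 2 * t ^ 2, -(2 * (starRingEnd ℂ t) ^ 2)]

/-- `G₂ = e^{iπ/9}·[[t², t, −t²], [t, 0, t], [−t², t, t²]]` -/
noncomputable def G₂ : Matrix (Fin 3) (Fin 3) ℂ :=
  Complex.exp ((Real.pi : ℂ) * Complex.I / 9) •
    !![t ^ 2, t, -t ^ 2; t, 0, t; -t ^ 2, t, t ^ 2]

noncomputable def E : ℂ := Complex.exp ((Real.pi : ℂ) * Complex.I / 9)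
noncomputable def s : ℂ := (Real.sqrt 2 : ℂ) / 2

lemma hE9 : E ^ 9 = -1 := by
  rw [E, ← Complex.exp_nat_mul, show ((9 : ℕ) : ℂ) * ((Real.pi : ℂ) * Complex.I / 9) =
    (Real.pi : ℂ) * Complex.I by push_cast; ring, Complex.exp_pi_mul_I]

lemma hs2 : s ^ 2 = 1 / 2 := by
  rw [s, div_pow, ← Complex.ofReal_pow, Real.sq_sqrt (by norm_num : (0:ℝ) ≤ 2)]
  norm_num

lemma ht : t = s * E ^ 6 := by
  rw [t, s, E, ← Complex.exp_nat_mul]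
  congr 1
  push_cast
  ring

lemma hct : (starRingEnd ℂ) t = -(s * E ^ 3) := by
  rw [t, _root_.map_mul]
  have h1 : (starRingEnd ℂ) ((Real.sqrt 2 : ℂ) / 2) = ((Real.sqrt 2 : ℂ) / 2) := by
    simp [map_div₀, map_ofNat, Complex.conj_ofReal]
  have h2 : (starRingEnd ℂ) (Complex.exp (2 * (Real.pi : ℂ) * Complex.I / 3)) =
      Complex.exp (-(2 * (Real.pi : ℂ) * Complex.I / 3)) := by
    rw [← Complex.exp_conj]
    congr 1
    simp [map_div₀, _root_.map_mul, map_ofNat, Complex.conj_ofReal, Complex.conj_I]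
    ring
  rw [h1, h2, show ((Real.sqrt 2 : ℂ) / 2) = s from rfl]
  have h3 : Complex.exp (-(2 * (Real.pi : ℂ) * Complex.I / 3)) = -(E ^ 3) := by
    have h4 : Complex.exp (-(2 * (Real.pi : ℂ) * Complex.I / 3)) =
        Complex.exp ((Real.pi : ℂ) * Complex.I) * Complex.exp ((Real.pi : ℂ) * Complex.I / 3)
          * (Complex.exp (2 * (Real.pi : ℂ) * Complex.I))⁻¹ := by
      rw [← Complex.exp_neg, ← Complex.exp_add, ← Complex.exp_add]
      congr 1
      ring
    rw [h4, Complex.exp_pi_mul_I, Complex.exp_two_pi_mul_I, E, ← Complex.exp_nat_mul,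
      show ((3 : ℕ) : ℂ) * ((Real.pi : ℂ) * Complex.I / 9) = (Real.pi : ℂ) * Complex.I / 3
        by push_cast; ring]
    ring
  rw [h3]
  ring

lemma hG1 : G₁ = !![E ^ 7, 0, 0; 0, -(E ^ 4), 0; 0, 0, -(E ^ 7)] := by
  rw [G₁, show Complex.exp ((Real.pi : ℂ) * Complex.I / 9) = E from rfl, hct, ht]
  ext i j
  fin_cases i <;> fin_cases j <;>
    simp [Matrix.diagonal_apply, Matrix.vecHead, Matrix.vecTail] <;>
    first
      | ring1
      | linear_combination ((2 : ℂ)*E^7) * hs2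
      | linear_combination ((-2 : ℂ)*E^7) * hs2
      | linear_combination ((2 : ℂ)*E^13) * hs2 + (E^4) * hE9
      | linear_combination ((-2 : ℂ)*E^13) * hs2 + (-(E^4)) * hE9

lemma hG2e : G₂ = !![-(E ^ 4)/2, s * E ^ 7, E ^ 4/2;
    s * E ^ 7, 0, s * E ^ 7; E ^ 4/2, s * E ^ 7, -(E ^ 4)/2] := by
  rw [G₂, show Complex.exp ((Real.pi : ℂ) * Complex.I / 9) = E from rfl, ht]
  ext i j
  fin_cases i <;> fin_cases j <;> simp [Matrix.vecHead, Matrix.vecTail] <;>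
    first
      | ring1
      | linear_combination (E^13) * hs2 + ((1/2 : ℂ)*E^4) * hE9
      | linear_combination (-(E^13)) * hs2 + (-((1/2 : ℂ)*E^4)) * hE9

noncomputable def A : Matrix (Fin 3) (Fin 3) ℂ :=
  !![-(1/2 : ℂ), -s, -(1/2 : ℂ); -s, 0, s; -(1/2 : ℂ), s, -(1/2 : ℂ)]

noncomputable def D : Matrix (Fin 3) (Fin 3) ℂ := Matrix.diagonal ![-1, -1, 1]

lemma hD : D = !![-1, 0, 0; 0, -1, 0; 0, 0, 1] := by
  rw [D]
  ext i j
  fin_cases i <;> fin_cases j <;> simp [Matrix.diagonal_apply, Matrix.vecHead, Matrix.vecTail]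

lemma hT1 : G₁ * G₂ * G₁ = A := by
  rw [hG1, hG2e, A]
  ext i j
  fin_cases i <;> fin_cases j <;>
    simp [Matrix.mul_apply, Fin.sum_univ_three, Matrix.vecHead, Matrix.vecTail] <;>
    first
      | ring1
      | linear_combination ((1/2 : ℂ) + (-1/2 : ℂ)*E^9) * hE9
      | linear_combination (s + (-1 : ℂ)*s*E^9) * hE9
      | linear_combination ((-1 : ℂ)*s + s*E^9) * hE9
      | linear_combination ((-1/2 : ℂ) + (1/2 : ℂ)*E^9) * hE9

lemma hA2 : A ^ 2 = 1 := by
  rw [pow_two, A]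
  ext i j
  fin_cases i <;> fin_cases j <;>
    simp [Matrix.mul_apply, Fin.sum_univ_three, Matrix.one_apply, Matrix.vecHead, Matrix.vecTail] <;>
    first
      | ring1
      | linear_combination ((1 : ℂ)) * hs2
      | linear_combination ((-1 : ℂ)) * hs2
      | linear_combination ((2 : ℂ)) * hs2

lemma hAne : A ≠ 1 := by
  intro h
  have h0 := congrFun (congrFun h 0) 0
  rw [A] at h0
  simp [Matrix.one_apply] at h0
  norm_num at h0

lemma hG19 : G₁ ^ 9 = D := by
  rw [hG1, show (!![E ^ 7, 0, 0; 0, -(E ^ 4), 0; 0, 0, -(E ^ 7)]) =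
      Matrix.diagonal ![E ^ 7, -(E ^ 4), -(E ^ 7)] by
        ext i j; fin_cases i <;> fin_cases j <;> simp [Matrix.diagonal_apply, Matrix.vecHead, Matrix.vecTail],
    Matrix.diagonal_pow, D]
  ext i j
  fin_cases i <;> fin_cases j <;>
    simp [Matrix.diagonal_apply, Pi.pow_apply, Matrix.vecHead, Matrix.vecTail] <;>
    first
      | ring1
      | linear_combination ((1 : ℂ) + (-1 : ℂ)*E^9 + E^18 + (-1 : ℂ)*E^27 + E^36 + (-1 : ℂ)*E^45 + E^54) * hE9
      | linear_combination ((1 : ℂ) + (-1 : ℂ)*E^9 + E^18 + (-1 : ℂ)*E^27) * hE9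
      | linear_combination ((-1 : ℂ) + E^9 + (-1 : ℂ)*E^18 + E^27 + (-1 : ℂ)*E^36 + E^45 + (-1 : ℂ)*E^54) * hE9

lemma hG1sq : G₁ ^ 2 = !![E ^ 14, 0, 0; 0, E ^ 8, 0; 0, 0, E ^ 14] := by
  rw [pow_two, hG1]
  ext i j
  fin_cases i <;> fin_cases j <;>
    simp [Matrix.mul_apply, Fin.sum_univ_three, Matrix.vecHead, Matrix.vecTail] <;> ring1

lemma hdet : G₂.det = 1 := by
  rw [hG2e, Matrix.det_fin_three]
  simp
  linear_combination ((2 : ℂ)*E^18) * hs2 + ((-1 : ℂ) + E^9) * hE9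

lemma hG2inv : G₂ * G₂⁻¹ = 1 :=
  Matrix.mul_nonsing_inv _ (by rw [hdet]; exact isUnit_one)

lemma hG2inv' : G₂⁻¹ * G₂ = 1 :=
  Matrix.nonsing_inv_mul _ (by rw [hdet]; exact isUnit_one)

lemma hDD : D * D = 1 := by
  rw [hD]
  ext i j
  fin_cases i <;> fin_cases j <;>
    simp [Matrix.mul_apply, Fin.sum_univ_three, Matrix.one_apply, Matrix.vecHead, Matrix.vecTail]

lemma hkey : G₂ * D * (G₁ ^ 2) * G₂ * D = D * G₂ := by
  have e1 : G₂ * D = !![(1/2 : ℂ)*E^4, (-1 : ℂ)*s*E^7, (1/2 : ℂ)*E^4;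
      (-1 : ℂ)*s*E^7, 0, s*E^7;
      (-1/2 : ℂ)*E^4, (-1 : ℂ)*s*E^7, (-1/2 : ℂ)*E^4] := by
    rw [hG2e, hD]
    ext i j
    fin_cases i <;> fin_cases j <;>
      simp [Matrix.mul_apply, Fin.sum_univ_three, Matrix.vecHead, Matrix.vecTail] <;> ring1
  have e2 : (!![(1/2 : ℂ)*E^4, (-1 : ℂ)*s*E^7, (1/2 : ℂ)*E^4;
      (-1 : ℂ)*s*E^7, 0, s*E^7;
      (-1/2 : ℂ)*E^4, (-1 : ℂ)*s*E^7, (-1/2 : ℂ)*E^4]) * G₁ ^ 2 =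
      !![(1/2 : ℂ), s*E^6, (1/2 : ℂ);
      (-1 : ℂ)*s*E^3, 0, s*E^3;
      (-1/2 : ℂ), s*E^6, (-1/2 : ℂ)] := by
    rw [hG1sq]
    ext i j
    fin_cases i <;> fin_cases j <;>
      simp [Matrix.mul_apply, Fin.sum_univ_three, Matrix.vecHead, Matrix.vecTail] <;>
      first
        | ring1
        | linear_combination ((-1 : ℂ)*s*E^3 + s*E^12) * hE9
        | linear_combination ((-1 : ℂ)*s*E^6) * hE9
        | linear_combination ((-1/2 : ℂ) + (1/2 : ℂ)*E^9) * hE9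
        | linear_combination ((1/2 : ℂ) + (-1/2 : ℂ)*E^9) * hE9
        | linear_combination (s*E^3 + (-1 : ℂ)*s*E^12) * hE9
        | linear_combination (s*E^6) * hE9
  have e3 : (!![(1/2 : ℂ), s*E^6, (1/2 : ℂ);
      (-1 : ℂ)*s*E^3, 0, s*E^3;
      (-1/2 : ℂ), s*E^6, (-1/2 : ℂ)]) * G₂ =
      !![(-1/2 : ℂ)*E^4, s*E^7, (-1/2 : ℂ)*E^4;
      s*E^7, 0, (-1 : ℂ)*s*E^7;
      (-1/2 : ℂ)*E^4, (-1 : ℂ)*s*E^7, (-1/2 : ℂ)*E^4] := by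
    rw [hG2e]
    ext i j
    fin_cases i <;> fin_cases j <;>
      simp [Matrix.mul_apply, Fin.sum_univ_three, Matrix.vecHead, Matrix.vecTail] <;>
      first
        | ring1
        | linear_combination (E^13) * hs2 + ((1/2 : ℂ)*E^4) * hE9
        | linear_combination (-(E^13)) * hs2 + (-((1/2 : ℂ)*E^4)) * hE9
  have e4 : (!![(-1/2 : ℂ)*E^4, s*E^7, (-1/2 : ℂ)*E^4;
      s*E^7, 0, (-1 : ℂ)*s*E^7;
      (-1/2 : ℂ)*E^4, (-1 : ℂ)*s*E^7, (-1/2 : ℂ)*E^4]) * D =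
      !![(1/2 : ℂ)*E^4, (-1 : ℂ)*s*E^7, (-1/2 : ℂ)*E^4;
      (-1 : ℂ)*s*E^7, 0, (-1 : ℂ)*s*E^7;
      (1/2 : ℂ)*E^4, s*E^7, (-1/2 : ℂ)*E^4] := by
    rw [hD]
    ext i j
    fin_cases i <;> fin_cases j <;>
      simp [Matrix.mul_apply, Fin.sum_univ_three, Matrix.vecHead, Matrix.vecTail] <;> ring1
  have e5 : D * G₂ = !![(1/2 : ℂ)*E^4, (-1 : ℂ)*s*E^7, (-1/2 : ℂ)*E^4;
      (-1 : ℂ)*s*E^7, 0, (-1 : ℂ)*s*E^7;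
      (1/2 : ℂ)*E^4, s*E^7, (-1/2 : ℂ)*E^4] := by
    rw [hD, hG2e]
    ext i j
    fin_cases i <;> fin_cases j <;>
      simp [Matrix.mul_apply, Fin.sum_univ_three, Matrix.vecHead, Matrix.vecTail] <;> ring1
  rw [e1, e2, e3, e4, e5]

lemma hDne : D ≠ 1 := by
  intro h
  have h0 := congrFun (congrFun h 0) 0
  rw [hD] at h0
  simp [Matrix.one_apply] at h0
  norm_num at h0

theorem stmt16 :
    (G₁ * G₂ * G₁) ^ 2 = 1 ∧ G₁ * G₂ * G₁ ≠ 1 ∧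
    (G₂ * G₁ ^ 9 * G₂⁻¹) ^ 2 = 1 ∧ G₂ * G₁ ^ 9 * G₂⁻¹ ≠ 1 ∧
    (G₂ * G₁ ^ 9 * G₂⁻¹) * (G₂ * G₁ ^ 2) * (G₂ * G₁ ^ 9 * G₂⁻¹) =
      Matrix.diagonal ![-1, -1, 1] := by
  refine ⟨by rw [hT1]; exact hA2, by rw [hT1]; exact hAne, ?_, ?_, ?_⟩
  · rw [hG19, pow_two]
    calc G₂ * D * G₂⁻¹ * (G₂ * D * G₂⁻¹)
        = G₂ * D * (G₂⁻¹ * G₂) * D * G₂⁻¹ := by noncomm_ring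
      _ = G₂ * (D * D) * G₂⁻¹ := by rw [hG2inv']; noncomm_ring
      _ = 1 := by rw [hDD, mul_one, hG2inv]
  · rw [hG19]
    intro h
    apply hDne
    have h1 : G₂⁻¹ * (G₂ * D * G₂⁻¹) * G₂ = G₂⁻¹ * 1 * G₂ := by rw [h]
    calc D = G₂⁻¹ * (G₂ * D * G₂⁻¹) * G₂ := by
            rw [show G₂⁻¹ * (G₂ * D * G₂⁻¹) * G₂ = (G₂⁻¹ * G₂) * D * (G₂⁻¹ * G₂) by noncomm_ring,
              hG2inv', one_mul, mul_one]
      _ = 1 := by rw [h1, mul_one, hG2inv']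
  · rw [hG19]
    have h2 : G₂ * D * G₂⁻¹ * (G₂ * G₁ ^ 2) * (G₂ * D * G₂⁻¹)
        = G₂ * D * (G₂⁻¹ * G₂) * G₁ ^ 2 * G₂ * D * G₂⁻¹ := by noncomm_ring
    rw [h2, hG2inv', mul_one,
      show G₂ * D * G₁ ^ 2 * G₂ * D * G₂⁻¹ = (G₂ * D * G₁ ^ 2 * G₂ * D) * G₂⁻¹ by noncomm_ring,
      hkey, show D * G₂ * G₂⁻¹ = D * (G₂ * G₂⁻¹) by noncomm_ring, hG2inv, mul_one, D]
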